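/- arXiv:2311.02792 — 3 statements merged into one kernel-verified Lean document; each statement's English description precedes it below -/
import Mathlib

section
/- Let Γ be an unbalanced connected signed graph on n vertices and H a spanning subgraph with n edges whose connected components are all trees or unbalanced unicyclic graphs (hence all components must be unbalanced unicyclic, say c(H) of them). Then det(N_H) = ±2^{c(H)}, where N_H is the n×n incidence matrix of H. -/
open Matrix BigOperators

/-- A signed graph together with an enumeration of its edges. -/
structure SignedIncidence (n m : ℕ) where
  G : SimpleGraph (Fin n)
  sigma : Fin n → Fin n → ℤ
  sigma_symm : ∀ i j, sigma i j = sigma j i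
  sigma_sign : ∀ i j, G.Adj i j → sigma i j = 1 ∨ sigma i j = -1
  ends : Fin m → Fin n × Fin n
  ends_adj : ∀ ℓ, G.Adj (ends ℓ).1 (ends ℓ).2
  ends_inj : Function.Injective fun ℓ => Sym2.mk (ends ℓ).1 (ends ℓ).2
  ends_surj : ∀ e ∈ G.edgeSet, ∃ ℓ, Sym2.mk (ends ℓ).1 (ends ℓ).2 = e

namespace SignedIncidence

variable {n m : ℕ}

def edge (S : SignedIncidence n m) (ℓ : Fin m) : Sym2 (Fin n) := Sym2.mk (S.ends ℓ).1 (S.ends ℓ).2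

/-- `N` is an incidence matrix of the signed graph `S`. -/
def IsIncidence (S : SignedIncidence n m) (N : Matrix (Fin n) (Fin m) ℝ) : Prop :=
  ∀ ℓ : Fin m,
    N (S.ends ℓ).1 ℓ * N (S.ends ℓ).2 ℓ = -((S.sigma (S.ends ℓ).1 (S.ends ℓ).2 : ℤ) : ℝ) ∧
    (N (S.ends ℓ).1 ℓ = 1 ∨ N (S.ends ℓ).1 ℓ = -1) ∧
    (N (S.ends ℓ).2 ℓ = 1 ∨ N (S.ends ℓ).2 ℓ = -1) ∧
    ∀ k, k ≠ (S.ends ℓ).1 → k ≠ (S.ends ℓ).2 → N k ℓ = 0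

/-- The sign of a walk (in the graph or any subgraph): product of edge signs. -/
def walkSign (S : SignedIncidence n m) {G' : SimpleGraph (Fin n)} {i j : Fin n}
    (w : G'.Walk i j) : ℤ :=
  (w.darts.map fun d => S.sigma d.toProd.1 d.toProd.2).prod

/-- A signed graph is balanced if every closed walk has sign `+1`. -/
def Balanced (S : SignedIncidence n m) : Prop :=
  ∀ (i : Fin n) (w : S.G.Walk i i), S.walkSign w = 1

end SignedIncidence

/-!
Write `A = N_H`: every column of `A` has exactly two nonzero entries, both `±1`, and the sign of a
walk is tracked by lifting it to the double cover `V × {±1}`. The proof is an induction on the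
number of vertices, keeping the hypothesis that every vertex lies on a closed walk of sign `-1`.
A vertex of degree one is deleted together with its edge by a Laplace expansion along its row,
which changes neither `|det A|` nor the number of components. Otherwise, since there are as many
edges as vertices, every vertex has degree two. At a vertex `v` with edges to `u` and to `w ≠ u`,
one column operation clears the row of `v` and leaves the incidence matrix of the graph in which
the path `u - v - w` is contracted to a single edge carrying its sign; again nothing changes. If
`u = w`, the two edges form a component of their own, which is unbalanced exactly when their
signs differ, and it splits off a `2 × 2` block of determinant `±2`.
-/

open Finset Relation

theorem Relation.ReflTransGen.of_detours {α β : Type*} {R : α → α → Prop} {R' : β → β → Prop}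
    {φ : β → α} (hφ : Function.Injective φ)
    (hstep : ∀ a b, R (φ a) (φ b) → ReflTransGen R' a b)
    (hdetour : ∀ a p c, R (φ a) p → p ∉ Set.range φ → R p c →
      ∃ b, c = φ b ∧ ReflTransGen R' a b)
    {a b : β} (h : ReflTransGen R (φ a) (φ b)) : ReflTransGen R' a b := by
  suffices ∀ p, ReflTransGen R p (φ b) → (∀ a, p = φ a → ReflTransGen R' a b) ∧
      (∀ a, R (φ a) p → p ∉ Set.range φ → ReflTransGen R' a b) from (this _ h).1 a rfl
  intro p hp
  induction hp using Relation.ReflTransGen.head_induction_on with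
  | refl => exact ⟨fun a ha => hφ ha ▸ .refl, fun _ _ hb => absurd ⟨b, rfl⟩ hb⟩
  | @head p m hpm _ ih =>
    refine ⟨?_, fun a hap hp => ?_⟩
    · rintro a rfl
      by_cases hm : m ∈ Set.range φ
      · obtain ⟨m, rfl⟩ := hm
        exact (hstep _ _ hpm).trans (ih.1 m rfl)
      · exact ih.2 a hpm hm
    · obtain ⟨m, rfl, ham⟩ := hdetour a p _ hap hp hpm
      exact ham.trans (ih.1 m rfl)

namespace SimpleGraph

variable {V : Type*} {p : V → Prop} {G : SimpleGraph V} {G' : SimpleGraph {x // p x}}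

theorem exists_injective_connectedComponent (h : ∀ x y, G'.Reachable x y ↔ G.Reachable x y) :
    ∃ ι : G'.ConnectedComponent → G.ConnectedComponent, Function.Injective ι ∧
      ∀ x, ι (G'.connectedComponentMk x) = G.connectedComponentMk x.1 := by
  refine ⟨ConnectedComponent.lift (fun x => G.connectedComponentMk x.1)
    fun x y w _ => ConnectedComponent.eq.mpr ((h x y).mp w.reachable), ?_, fun _ => rfl⟩
  intro c d hcd
  induction c using ConnectedComponent.ind
  induction d using ConnectedComponent.ind
  exact ConnectedComponent.eq.mpr ((h _ _).mpr (ConnectedComponent.eq.mp hcd))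

theorem card_connectedComponent_subtype_ne_eq {v u : V} {G' : SimpleGraph {x // x ≠ v}}
    (h : ∀ x y, G'.Reachable x y ↔ G.Reachable x y) (hvu : G.Adj v u) :
    Nat.card G'.ConnectedComponent = Nat.card G.ConnectedComponent := by
  obtain ⟨ι, hinj, hι⟩ := exists_injective_connectedComponent h
  refine Nat.card_eq_of_bijective ι ⟨hinj, fun c => ?_⟩
  induction c using ConnectedComponent.ind with | _ z =>
  by_cases hz : z = v
  · subst hz
    exact ⟨_, (hι ⟨u, hvu.ne.symm⟩).trans (ConnectedComponent.eq.mpr hvu.reachable.symm)⟩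
  · exact ⟨_, hι ⟨z, hz⟩⟩

theorem card_connectedComponent_eq_subtype_add_one [Finite V]
    (h : ∀ x y, G'.Reachable x y ↔ G.Reachable x y) {v : V}
    (hv : ∀ z, G.Reachable z v ↔ ¬p z) :
    Nat.card G.ConnectedComponent = Nat.card G'.ConnectedComponent + 1 := by
  obtain ⟨ι, hinj, hι⟩ := exists_injective_connectedComponent h
  have hv' : ∀ x : {x // p x}, ι (G'.connectedComponentMk x) ≠ G.connectedComponentMk v :=
    fun x hx => (hv x).mp (ConnectedComponent.eq.mp ((hι x).symm.trans hx)) x.2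
  rw [← Finite.card_option]
  refine (Nat.card_eq_of_bijective (fun o => o.elim (G.connectedComponentMk v) ι)
    ⟨?_, fun c => ?_⟩).symm
  · rintro (_ | c) (_ | d) hcd
    · rfl
    · induction d using ConnectedComponent.ind
      exact absurd hcd.symm (hv' _)
    · induction c using ConnectedComponent.ind
      exact absurd hcd (hv' _)
    · exact congrArg some (hinj hcd)
  · induction c using ConnectedComponent.ind with | _ z =>
    by_cases hz : p z
    · exact ⟨some (G'.connectedComponentMk ⟨z, hz⟩), hι _⟩
    · exact ⟨none, ConnectedComponent.eq.mpr ((hv z).mpr hz).symm⟩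

end SimpleGraph

def finTwoEquivSubtypeOr {α : Type*} [DecidableEq α] {a b : α} (h : a ≠ b) :
    Fin 2 ≃ {x // x = a ∨ x = b} where
  toFun := ![⟨a, .inl rfl⟩, ⟨b, .inr rfl⟩]
  invFun x := if x.1 = a then 0 else 1
  left_inv i := by fin_cases i <;> simp [h.symm]
  right_inv := by rintro ⟨x, rfl | rfl⟩ <;> simp [h.symm]

namespace Matrix

variable {V E R : Type*} [CommRing R]

section Determinant

variable [LinearOrder R] [IsStrictOrderedRing R]

theorem abs_det_submatrix_eq_of_equiv {I J : Type*} [Fintype I] [DecidableEq I] [Fintype J]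
    [DecidableEq J] (A : Matrix V E R) (e₁ : I ≃ V) (e₂ : I ≃ E) (e₁' : J ≃ V) (e₂' : J ≃ E) :
    |(A.submatrix e₁ e₂).det| = |(A.submatrix e₁' e₂').det| := by
  have : A.submatrix e₁ e₂ =
      (A.submatrix e₁' e₂').submatrix (e₁.trans e₁'.symm) (e₂.trans e₂'.symm) := by
    ext; simp
  rw [this, abs_det_submatrix_equiv_equiv]

theorem nonempty_equiv_subtype_compl [Fintype V] [Fintype E] {p : V → Prop} {q : E → Prop}
    [DecidablePred p] [DecidablePred q] (f : V ≃ E) (g : {x // p x} ≃ {ℓ // q ℓ}) :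
    Nonempty ({x // ¬p x} ≃ {ℓ // ¬q ℓ}) := by
  rw [← Fintype.card_eq, Fintype.card_subtype_compl, Fintype.card_subtype_compl,
    Fintype.card_congr f, Fintype.card_congr g]

theorem abs_det_eq_mul_of_block [Fintype V] [DecidableEq V] {p : V → Prop} {q : E → Prop}
    [DecidablePred p] [DecidablePred q] (A : Matrix V E R) (h : ∀ x ℓ, p x → ¬q ℓ → A x ℓ = 0)
    (f : V ≃ E) (g₁ : {x // p x} ≃ {ℓ // q ℓ}) (g₂ : {x // ¬p x} ≃ {ℓ // ¬q ℓ}) :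
    |(A.submatrix id f).det| =
      |((A.submatrix Subtype.val Subtype.val).submatrix id g₁).det| *
        |((A.submatrix Subtype.val Subtype.val).submatrix id g₂).det| := by
  have hblock : A.submatrix (Equiv.sumCompl p) ((g₁.sumCongr g₂).trans (Equiv.sumCompl q)) =
      fromBlocks ((A.submatrix Subtype.val Subtype.val).submatrix id g₁) 0
        (A.submatrix (fun x : {x // ¬p x} => x.1) (fun x : {x // p x} => (g₁ x).1))
        ((A.submatrix Subtype.val Subtype.val).submatrix id g₂) := by
    ext (x | x) (y | y) <;> simp
    exact h _ _ x.2 (g₂ y).2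
  rw [← abs_mul, ← det_fromBlocks_zero₁₂, ← hblock, ← Equiv.coe_refl]
  exact abs_det_submatrix_eq_of_equiv _ _ _ _ _

theorem abs_det_eq_abs_mul_of_row [Fintype V] [DecidableEq V] [DecidableEq E] {v : V} {ℓ₀ : E}
    (A : Matrix V E R) (h : ∀ ℓ, ℓ ≠ ℓ₀ → A v ℓ = 0) (f : V ≃ E)
    (g : {x // x ≠ v} ≃ {ℓ // ℓ ≠ ℓ₀}) :
    |(A.submatrix id f).det| =
      |A v ℓ₀| * |((A.submatrix Subtype.val Subtype.val).submatrix id g).det| := by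
  rw [abs_det_eq_mul_of_block (p := (· = v)) (q := (· = ℓ₀)) A (by rintro x ℓ rfl; exact h ℓ)
    f (Equiv.ofUnique _ _) g]
  congr 2
  convert det_unique _ <;> rfl

theorem abs_det_submatrix_finTwoEquiv [Fintype V] [DecidableEq V] [DecidableEq E] (A : Matrix V E R)
    {v u : V} {ℓ₁ ℓ₂ : E} (hvu : v ≠ u) (h12 : ℓ₁ ≠ ℓ₂) :
    |((A.submatrix Subtype.val Subtype.val).submatrix id
      ((finTwoEquivSubtypeOr hvu).symm.trans (finTwoEquivSubtypeOr h12))).det| =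
      |A v ℓ₁ * A u ℓ₂ - A v ℓ₂ * A u ℓ₁| := by
  rw [← Equiv.coe_refl, abs_det_submatrix_eq_of_equiv _ _ _ (finTwoEquivSubtypeOr hvu)
    (finTwoEquivSubtypeOr h12), det_fin_two]
  rfl

theorem abs_mul_sub_mul_eq_two {a b c d : R} (ha : |a| = 1) (hb : |b| = 1) (hc : |c| = 1)
    (hd : |d| = 1) (h : a * c ≠ b * d) : |a * d - b * c| = 2 := by
  rcases (abs_eq zero_le_one).mp ha with rfl | rfl <;>
    rcases (abs_eq zero_le_one).mp hb with rfl | rfl <;>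
    rcases (abs_eq zero_le_one).mp hc with rfl | rfl <;>
    rcases (abs_eq zero_le_one).mp hd with rfl | rfl <;>
    norm_num at h <;> norm_num

end Determinant

structure IsSignedIncidence [Fintype V] [LinearOrder R] (A : Matrix V E R) : Prop where
  abs_eq_one : ∀ x ℓ, A x ℓ ≠ 0 → |A x ℓ| = 1
  card_support : ∀ ℓ, #{x | A x ℓ ≠ 0} = 2

/-- Steps in the signed double cover: the second coordinate carries the sign of the walk so far,
an edge `ℓ` between `x` and `y` having sign `-(A x ℓ * A y ℓ)`. -/
def signedStep (A : Matrix V E R) (p q : V × R) : Prop :=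
  p.1 ≠ q.1 ∧ ∃ ℓ, A p.1 ℓ ≠ 0 ∧ A q.1 ℓ ≠ 0 ∧ q.2 = -(A p.1 ℓ * A q.1 ℓ) * p.2

def HasNegClosedWalk (A : Matrix V E R) (x : V) : Prop :=
  ReflTransGen (signedStep A) (x, 1) (x, -1)

def incidenceGraph (A : Matrix V E R) : SimpleGraph V where
  Adj x y := x ≠ y ∧ ∃ ℓ, A x ℓ ≠ 0 ∧ A y ℓ ≠ 0
  symm := ⟨fun _ _ ⟨hne, ℓ, hx, hy⟩ => ⟨hne.symm, ℓ, hy, hx⟩⟩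
  loopless := ⟨fun _ h => h.1 rfl⟩

theorem incidenceGraph_adj {A : Matrix V E R} {x y : V} :
    (incidenceGraph A).Adj x y ↔ x ≠ y ∧ ∃ ℓ, A x ℓ ≠ 0 ∧ A y ℓ ≠ 0 :=
  Iff.rfl

theorem reflTransGen_signedStep_mul {A : Matrix V E R} {x y : V} {s t : R} (c : R)
    (h : ReflTransGen (signedStep A) (x, s) (y, t)) :
    ReflTransGen (signedStep A) (x, c * s) (y, c * t) :=
  h.lift (fun p => (p.1, c * p.2)) fun _ _ ⟨hne, ℓ, hp, hq, hs⟩ =>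
    ⟨hne, ℓ, hp, hq, by simp only [hs]; ring⟩

theorem incidenceGraph_reachable_iff {A : Matrix V E R} {x y : V} :
    (incidenceGraph A).Reachable x y ↔ ∃ t, ReflTransGen (signedStep A) (x, 1) (y, t) := by
  rw [SimpleGraph.reachable_iff_reflTransGen]
  constructor
  · intro h
    induction h with
    | refl => exact ⟨1, .refl⟩
    | tail _ hyz ih =>
      obtain ⟨t, ht⟩ := ih
      obtain ⟨hne, ℓ, hy, hz⟩ := incidenceGraph_adj.mp hyz
      exact ⟨-(A _ ℓ * A _ ℓ) * t, ht.tail ⟨hne, ℓ, hy, hz, rfl⟩⟩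
  · rintro ⟨t, ht⟩
    exact ht.lift Prod.fst fun _ _ ⟨hne, ℓ, hp, hq, _⟩ => incidenceGraph_adj.mpr ⟨hne, ℓ, hp, hq⟩

theorem HasNegClosedWalk.exists_ne_zero [LinearOrder R] [IsStrictOrderedRing R]
    {A : Matrix V E R} {x : V} (h : HasNegClosedWalk A x) : ∃ ℓ, A x ℓ ≠ 0 := by
  rcases h.cases_head with h | ⟨_, ⟨_, ℓ, hx, _⟩, _⟩
  · exact absurd (congrArg Prod.snd h) (by norm_num)
  · exact ⟨ℓ, hx⟩

section Basic

variable [Fintype V] [LinearOrder R] {A : Matrix V E R}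

theorem IsSignedIncidence.mul_self_eq_one (hA : IsSignedIncidence A) {x : V} {ℓ : E}
    (h : A x ℓ ≠ 0) : A x ℓ * A x ℓ = 1 := by
  rw [← abs_mul_abs_self, hA.abs_eq_one x ℓ h, one_mul]

theorem IsSignedIncidence.neg_mul_neg_mul_eq (hA : IsSignedIncidence A) {x z : V} {ℓ : E}
    (hx : A x ℓ ≠ 0) (hz : A z ℓ ≠ 0) (s : R) :
    -(A z ℓ * A x ℓ) * (-(A x ℓ * A z ℓ) * s) = s := by
  linear_combination s * (A z ℓ * A z ℓ) * hA.mul_self_eq_one hx + s * hA.mul_self_eq_one hz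

theorem IsSignedIncidence.exists_support_eq_pair [DecidableEq V] (hA : IsSignedIncidence A)
    {v : V} {ℓ : E} (h : A v ℓ ≠ 0) : ∃ u, u ≠ v ∧ ∀ z, A z ℓ ≠ 0 ↔ z = v ∨ z = u := by
  obtain ⟨x, y, hxy, hs⟩ := card_eq_two.mp (hA.card_support ℓ)
  have hmem : ∀ z, A z ℓ ≠ 0 ↔ z = x ∨ z = y := fun z => by
    simpa using congrArg (z ∈ ·) hs
  rcases (hmem v).mp h with rfl | rfl
  · exact ⟨y, hxy.symm, hmem⟩
  · exact ⟨x, hxy, fun z => (hmem z).trans or_comm⟩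

theorem IsSignedIncidence.sum_card_row [Fintype E] (hA : IsSignedIncidence A) :
    ∑ x, #{ℓ | A x ℓ ≠ 0} = 2 * Fintype.card E := by
  have := @sum_card_bipartiteAbove_eq_sum_card_bipartiteBelow _ _ (fun x ℓ => A x ℓ ≠ 0) univ univ
    fun _ _ => inferInstance
  simp only [bipartiteAbove, bipartiteBelow, hA.card_support] at this
  simp [this, mul_comm]

theorem IsSignedIncidence.card_row_eq_two [Fintype E] (hA : IsSignedIncidence A)
    (hVE : Fintype.card V = Fintype.card E) (h : ∀ x, 2 ≤ #{ℓ | A x ℓ ≠ 0}) (x : V) :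
    #{ℓ | A x ℓ ≠ 0} = 2 := by
  have hsum : ∑ _x : V, 2 = ∑ x, #{ℓ | A x ℓ ≠ 0} := by
    simp [hA.sum_card_row, hVE, mul_comm]
  exact ((sum_eq_sum_iff_of_le fun x _ => h x).mp hsum x (mem_univ x)).symm

theorem IsSignedIncidence.signedStep_symm (hA : IsSignedIncidence A) {p q : V × R}
    (h : signedStep A p q) : signedStep A q p := by
  obtain ⟨hne, ℓ, hp, hq, hs⟩ := h
  refine ⟨hne.symm, ℓ, hq, hp, ?_⟩
  rw [hs]
  linear_combination (-(A q.1 ℓ * A q.1 ℓ) * p.2) * hA.mul_self_eq_one hp -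
    p.2 * hA.mul_self_eq_one hq

theorem IsSignedIncidence.reflTransGen_signedStep_symm (hA : IsSignedIncidence A)
    {p q : V × R} (h : ReflTransGen (signedStep A) p q) : ReflTransGen (signedStep A) q p := by
  induction h with
  | refl => rfl
  | tail _ hbc ih => exact ih.head (hA.signedStep_symm hbc)

theorem IsSignedIncidence.hasNegClosedWalk_of_reachable (hA : IsSignedIncidence A) {x y : V}
    (hxy : (incidenceGraph A).Reachable x y) (hy : HasNegClosedWalk A y) :
    HasNegClosedWalk A x := by
  obtain ⟨t, ht⟩ := incidenceGraph_reachable_iff.mp hxy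
  have hback := reflTransGen_signedStep_mul (-1) (hA.reflTransGen_signedStep_symm ht)
  have hloop := reflTransGen_signedStep_mul t hy
  simp only [mul_one, mul_neg, neg_mul, one_mul] at hback hloop
  exact ht.trans (hloop.trans hback)

end Basic

section Restriction

variable {p : V → Prop} {q : E → Prop} {A : Matrix V E R}

theorem IsSignedIncidence.submatrix_subtype [Fintype V] [LinearOrder R] [DecidablePred p]
    (hA : IsSignedIncidence A) (h : ∀ x ℓ, q ℓ → A x ℓ ≠ 0 → p x) :
    IsSignedIncidence (A.submatrix (Subtype.val : {x // p x} → V) (Subtype.val : {ℓ // q ℓ} → E))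
    where
  abs_eq_one x ℓ := hA.abs_eq_one x.1 ℓ.1
  card_support ℓ := by
    rw [← hA.card_support ℓ.1]
    refine card_bij (fun x _ => x.1) (fun x hx => ?_) (fun _ _ _ _ => Subtype.ext) fun x hx => ?_
    · rw [mem_filter] at hx ⊢
      exact ⟨mem_univ _, hx.2⟩
    · rw [mem_filter] at hx
      exact ⟨⟨x, h x ℓ ℓ.2 hx.2⟩, by rw [mem_filter]; exact ⟨mem_univ _, hx.2⟩, rfl⟩

theorem signedStep_submatrix_subtype
    (hq : ∀ ℓ x y, p x → p y → x ≠ y → A x ℓ ≠ 0 → A y ℓ ≠ 0 → q ℓ) {x y : {x // p x}}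
    {s t : R} (h : signedStep A (x.1, s) (y.1, t)) :
    signedStep (A.submatrix Subtype.val (Subtype.val : {ℓ // q ℓ} → E)) (x, s) (y, t) := by
  obtain ⟨hne, ℓ, hx, hy, hs⟩ := h
  exact ⟨fun h => hne (congrArg Subtype.val h), ⟨ℓ, hq ℓ x y x.2 y.2 hne hx hy⟩, hx, hy, hs⟩

theorem incidenceGraph_submatrix_subtype_adj {x y : {x // p x}}
    (h : (incidenceGraph (A.submatrix Subtype.val (Subtype.val : {ℓ // q ℓ} → E))).Adj x y) :
    (incidenceGraph A).Adj x y := by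
  obtain ⟨hne, ℓ, hx, hy⟩ := incidenceGraph_adj.mp h
  exact incidenceGraph_adj.mpr ⟨fun h => hne (Subtype.ext h), ℓ, hx, hy⟩

def SignedWalksDescend {E' : Type*} (A : Matrix V E R) (A' : Matrix {x // p x} E' R) : Prop :=
  ∀ (x y : {x // p x}) (s t : R), ReflTransGen (signedStep A) (x.1, s) (y.1, t) →
    ReflTransGen (signedStep A') (x, s) (y, t)

variable {E' : Type*} {A' : Matrix {x // p x} E' R}

theorem signedWalksDescend_of_detours
    (hstep : ∀ (x y : {x // p x}) (s t : R), signedStep A (x.1, s) (y.1, t) →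
      signedStep A' (x, s) (y, t))
    (hdetour : ∀ (x : {x // p x}) (z y : V) (s r t : R), ¬p z → signedStep A (x.1, s) (z, r) →
      signedStep A (z, r) (y, t) → ∃ hy : p y, ReflTransGen (signedStep A') (x, s) (⟨y, hy⟩, t)) :
    SignedWalksDescend A A' := by
  intro x y s t h
  refine ReflTransGen.of_detours (φ := Prod.map Subtype.val id) (a := (x, s)) (b := (y, t))
    (Subtype.val_injective.prodMap Function.injective_id)
    (fun a b hab => .single (hstep a.1 b.1 a.2 b.2 hab)) (fun a m c ham hm hmc => ?_) h
  obtain ⟨hc, hac⟩ := hdetour a.1 m.1 c.1 a.2 m.2 c.2 (fun hz => hm ⟨(⟨m.1, hz⟩, m.2), rfl⟩)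
    ham hmc
  exact ⟨(⟨c.1, hc⟩, c.2), rfl, hac⟩

theorem SignedWalksDescend.hasNegClosedWalk (h : SignedWalksDescend A A')
    (hneg : ∀ x, HasNegClosedWalk A x) (x : {x // p x}) : HasNegClosedWalk A' x :=
  h x x 1 (-1) (hneg x)

theorem SignedWalksDescend.reachable_iff (h : SignedWalksDescend A A')
    (hadj : ∀ x y, (incidenceGraph A').Adj x y → (incidenceGraph A).Reachable x y)
    (x y : {x // p x}) :
    (incidenceGraph A').Reachable x y ↔ (incidenceGraph A).Reachable x y := by
  refine ⟨fun hxy => ?_, fun hxy => ?_⟩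
  · rw [SimpleGraph.reachable_iff_reflTransGen] at hxy ⊢
    exact ReflTransGen.lift' Subtype.val
      (fun a b hab => (SimpleGraph.reachable_iff_reflTransGen _ _).mp (hadj a b hab)) _ _ hxy
  · obtain ⟨t, ht⟩ := incidenceGraph_reachable_iff.mp hxy
    exact incidenceGraph_reachable_iff.mpr ⟨t, h x y 1 t ht⟩

theorem signedWalksDescend_of_isolated (hrow : ∀ x ℓ, p x → A x ℓ ≠ 0 → q ℓ)
    (hcol : ∀ x ℓ, q ℓ → A x ℓ ≠ 0 → p x) :
    SignedWalksDescend A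
      (A.submatrix (Subtype.val : {x // ¬p x} → V) (Subtype.val : {ℓ // ¬q ℓ} → E)) :=
  signedWalksDescend_of_detours
    (fun _ _ _ _ => signedStep_submatrix_subtype fun ℓ x _ hx _ _ hxℓ _ hℓ => hx (hcol x ℓ hℓ hxℓ))
    fun x z _ _ _ _ hz ⟨_, ℓ, hxℓ, hzℓ, _⟩ _ =>
      absurd (hcol x.1 ℓ (hrow z ℓ (not_not.mp hz) hzℓ) hxℓ) x.2

theorem reachable_imp_of_isolated (hrow : ∀ x ℓ, p x → A x ℓ ≠ 0 → q ℓ)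
    (hcol : ∀ x ℓ, q ℓ → A x ℓ ≠ 0 → p x) {x y : V} (h : (incidenceGraph A).Reachable x y)
    (hy : p y) : p x := by
  rw [SimpleGraph.reachable_iff_reflTransGen] at h
  induction h using ReflTransGen.head_induction_on with
  | refl => exact hy
  | head hab _ ih =>
    obtain ⟨-, ℓ, ha, hb⟩ := incidenceGraph_adj.mp hab
    exact hcol _ ℓ (hrow _ ℓ ih hb) ha

end Restriction

structure EdgesAt (A : Matrix V E R) (v : V) (ℓ₁ : E) (u : V) (ℓ₂ : E) (w : V) : Prop where
  row : ∀ ℓ, A v ℓ ≠ 0 ↔ ℓ = ℓ₁ ∨ ℓ = ℓ₂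
  col₁ : ∀ z, A z ℓ₁ ≠ 0 ↔ z = v ∨ z = u
  col₂ : ∀ z, A z ℓ₂ ≠ 0 ↔ z = v ∨ z = w
  ne₁ : u ≠ v
  ne₂ : w ≠ v

namespace EdgesAt

variable {A : Matrix V E R} {v u w : V} {ℓ₁ ℓ₂ : E}

theorem apply_ne_zero₁ (h : EdgesAt A v ℓ₁ u ℓ₂ w) : A v ℓ₁ ≠ 0 ∧ A u ℓ₁ ≠ 0 :=
  ⟨(h.row ℓ₁).mpr (.inl rfl), (h.col₁ u).mpr (.inr rfl)⟩

theorem apply_ne_zero₂ (h : EdgesAt A v ℓ₁ u ℓ₂ w) : A v ℓ₂ ≠ 0 ∧ A w ℓ₂ ≠ 0 :=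
  ⟨(h.row ℓ₂).mpr (.inr rfl), (h.col₂ w).mpr (.inr rfl)⟩

theorem adj₁ (h : EdgesAt A v ℓ₁ u ℓ₂ w) : (incidenceGraph A).Adj v u :=
  incidenceGraph_adj.mpr ⟨h.ne₁.symm, ℓ₁, h.apply_ne_zero₁⟩

theorem adj₂ (h : EdgesAt A v ℓ₁ u ℓ₂ w) : (incidenceGraph A).Adj v w :=
  incidenceGraph_adj.mpr ⟨h.ne₂.symm, ℓ₂, h.apply_ne_zero₂⟩

theorem edge_ne (h : EdgesAt A v ℓ₁ u ℓ₂ w) (huw : u ≠ w) : ℓ₁ ≠ ℓ₂ := by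
  rintro rfl
  exact huw (((h.col₂ u).mp h.apply_ne_zero₁.2).resolve_left h.ne₁)

theorem cases_of_ne_zero (h : EdgesAt A v ℓ₁ u ℓ₂ w) {ℓ : E} {x : V} (hx : x ≠ v)
    (hvℓ : A v ℓ ≠ 0) (hxℓ : A x ℓ ≠ 0) : (ℓ = ℓ₁ ∧ x = u) ∨ (ℓ = ℓ₂ ∧ x = w) := by
  rcases (h.row ℓ).mp hvℓ with rfl | rfl
  · exact .inl ⟨rfl, ((h.col₁ x).mp hxℓ).resolve_left hx⟩
  · exact .inr ⟨rfl, ((h.col₂ x).mp hxℓ).resolve_left hx⟩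

end EdgesAt

/-- Subtracting `A v ℓ₁ * A v ℓ₂` times column `ℓ₂` from column `ℓ₁` clears the entry at `v`.
When `ℓ₁` joins `v` to `u` and `ℓ₂` joins `v` to `w`, the rows other than `v` form the incidence
matrix of the graph in which the path `u - v - w` is contracted to an edge `ℓ₁` from `u` to `w`,
carrying the sign of the path. -/
def contractCol [DecidableEq E] (A : Matrix V E R) (v : V) (ℓ₁ ℓ₂ : E) : Matrix V E R :=
  A.updateCol ℓ₁ fun x => A x ℓ₁ - A v ℓ₁ * A v ℓ₂ * A x ℓ₂

section ContractCol

variable [DecidableEq E] {A : Matrix V E R} {v u w : V} {ℓ₁ ℓ₂ : E}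

theorem contractCol_apply_of_ne {x : V} {ℓ : E} (h : ℓ ≠ ℓ₁) :
    contractCol A v ℓ₁ ℓ₂ x ℓ = A x ℓ := by
  simp [contractCol, h]

theorem contractCol_apply_self (x : V) :
    contractCol A v ℓ₁ ℓ₂ x ℓ₁ = A x ℓ₁ - A v ℓ₁ * A v ℓ₂ * A x ℓ₂ := by
  simp [contractCol]

theorem det_contractCol_submatrix [Fintype V] [DecidableEq V] (h12 : ℓ₁ ≠ ℓ₂) (f : V ≃ E) :
    ((contractCol A v ℓ₁ ℓ₂).submatrix id f).det = (A.submatrix id f).det := by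
  rw [contractCol, ← Equiv.coe_refl, submatrix_updateCol_equiv]
  convert det_updateCol_add_smul_self (A.submatrix (Equiv.refl V) f)
    (f.symm.injective.ne h12) (-(A v ℓ₁ * A v ℓ₂)) using 3
  ext x
  simp [sub_eq_add_neg]

theorem EdgesAt.contractCol_apply_left (h : EdgesAt A v ℓ₁ u ℓ₂ w) (huw : u ≠ w) :
    contractCol A v ℓ₁ ℓ₂ u ℓ₁ = A u ℓ₁ := by
  have : A u ℓ₂ = 0 := not_not.mp fun h' => ((h.col₂ u).mp h').elim h.ne₁ huw
  rw [contractCol_apply_self, this, mul_zero, sub_zero]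

theorem EdgesAt.contractCol_apply_right (h : EdgesAt A v ℓ₁ u ℓ₂ w) (huw : u ≠ w) :
    contractCol A v ℓ₁ ℓ₂ w ℓ₁ = -(A v ℓ₁ * A v ℓ₂ * A w ℓ₂) := by
  have : A w ℓ₁ = 0 := not_not.mp fun h' => ((h.col₁ w).mp h').elim h.ne₂ huw.symm
  rw [contractCol_apply_self, this, zero_sub]

theorem EdgesAt.signedStep_contractCol (h : EdgesAt A v ℓ₁ u ℓ₂ w) {x y : {x // x ≠ v}}
    {s t : R} (hxy : signedStep A (x.1, s) (y.1, t)) :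
    signedStep ((contractCol A v ℓ₁ ℓ₂).submatrix Subtype.val (Subtype.val : {ℓ // ℓ ≠ ℓ₂} → E))
      (x, s) (y, t) := by
  obtain ⟨hne, ℓ, hxℓ, hyℓ, ht⟩ := hxy
  have hℓ₁ : ℓ ≠ ℓ₁ := by
    rintro rfl
    exact hne ((((h.col₁ x).mp hxℓ).resolve_left x.2).trans
      (((h.col₁ y).mp hyℓ).resolve_left y.2).symm)
  have hℓ₂ : ℓ ≠ ℓ₂ := by
    rintro rfl
    exact hne ((((h.col₂ x).mp hxℓ).resolve_left x.2).trans
      (((h.col₂ y).mp hyℓ).resolve_left y.2).symm)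
  refine ⟨fun he => hne (congrArg Subtype.val he), ⟨ℓ, hℓ₂⟩, ?_, ?_, ?_⟩ <;>
    simp only [submatrix_apply, contractCol_apply_of_ne hℓ₁] <;> assumption

end ContractCol

variable [LinearOrder R]

def DetFormula (V E R : Type*) [Fintype V] [DecidableEq V] [Fintype E] [CommRing R]
    [LinearOrder R] : Prop :=
  ∀ A : Matrix V E R, IsSignedIncidence A → (∀ x, HasNegClosedWalk A x) →
    ∀ f : V ≃ E, |(A.submatrix id f).det| = 2 ^ Nat.card (incidenceGraph A).ConnectedComponent

section Leaf

variable [Fintype V] {A : Matrix V E R} {v u : V} {ℓ₀ : E}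

theorem signedWalksDescend_leaf (hA : IsSignedIncidence A) (hv : ∀ ℓ, A v ℓ ≠ 0 ↔ ℓ = ℓ₀)
    (hu : ∀ z, A z ℓ₀ ≠ 0 ↔ z = v ∨ z = u) :
    SignedWalksDescend A
      (A.submatrix (Subtype.val : {x // x ≠ v} → V) (Subtype.val : {ℓ // ℓ ≠ ℓ₀} → E)) := by
  refine signedWalksDescend_of_detours (fun x y s t h => signedStep_submatrix_subtype ?_ h) ?_
  · rintro ℓ x y hx hy hxy hxℓ hyℓ rfl
    exact hxy ((((hu x).mp hxℓ).resolve_left hx).trans (((hu y).mp hyℓ).resolve_left hy).symm)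
  · rintro x z y s r t hz ⟨-, ℓ, hxℓ, hzℓ, hr⟩ ⟨hzy, ℓ', hzℓ', hyℓ', ht⟩
    dsimp only at hxℓ hzℓ hr hzy hzℓ' hyℓ' ht
    have hzv : z = v := not_not.mp hz
    have hℓ := (hv ℓ).mp (hzv ▸ hzℓ)
    have hℓ' := (hv ℓ').mp (hzv ▸ hzℓ')
    subst z ℓ ℓ'
    have hxu : x.1 = u := ((hu x.1).mp hxℓ).resolve_left x.2
    have hyu : y = u := ((hu y).mp hyℓ').resolve_left hzy.symm
    have hstate : ((⟨y, hzy.symm⟩ : {x // x ≠ v}), t) = (x, s) := by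
      refine Prod.ext (Subtype.ext (hyu.trans hxu.symm)) ?_
      show t = s
      rw [ht, hr, hyu, ← hxu]
      exact hA.neg_mul_neg_mul_eq hxℓ hzℓ s
    exact ⟨hzy.symm, hstate ▸ .refl⟩

theorem DetFormula.of_leaf [IsStrictOrderedRing R] [DecidableEq V] [Fintype E] [DecidableEq E]
    (ih : DetFormula {x // x ≠ v} {ℓ // ℓ ≠ ℓ₀} R) (hA : IsSignedIncidence A)
    (hneg : ∀ x, HasNegClosedWalk A x) (hv : ∀ ℓ, A v ℓ ≠ 0 ↔ ℓ = ℓ₀) (f : V ≃ E) :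
    |(A.submatrix id f).det| = 2 ^ Nat.card (incidenceGraph A).ConnectedComponent := by
  have hvℓ₀ : A v ℓ₀ ≠ 0 := (hv ℓ₀).mpr rfl
  obtain ⟨u, huv, hu⟩ := hA.exists_support_eq_pair hvℓ₀
  have hrow : ∀ ℓ, ℓ ≠ ℓ₀ → A v ℓ = 0 := fun ℓ hℓ => not_not.mp fun h => hℓ ((hv ℓ).mp h)
  have hdesc := signedWalksDescend_leaf hA hv hu
  have hcc := SimpleGraph.card_connectedComponent_subtype_ne_eq
    (hdesc.reachable_iff fun _ _ h => (incidenceGraph_submatrix_subtype_adj h).reachable)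
    (incidenceGraph_adj.mpr ⟨huv.symm, ℓ₀, hvℓ₀, (hu u).mpr (.inr rfl)⟩)
  obtain ⟨g⟩ := nonempty_equiv_subtype_compl (p := (· = v)) (q := (· = ℓ₀)) f
    (Equiv.ofUnique _ _)
  rw [abs_det_eq_abs_mul_of_row A hrow f g, hA.abs_eq_one _ _ hvℓ₀, one_mul,
    ih _ (hA.submatrix_subtype fun x ℓ hℓ hx hxv => hx (hxv ▸ hrow ℓ hℓ))
      (hdesc.hasNegClosedWalk hneg) g, hcc]

end Leaf

variable [IsStrictOrderedRing R]

section Contraction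

variable [Fintype V] [DecidableEq E] {A : Matrix V E R} {v u w : V} {ℓ₁ ℓ₂ : E}

theorem EdgesAt.contractCol_apply_eq_zero (h : EdgesAt A v ℓ₁ u ℓ₂ w)
    (hA : IsSignedIncidence A) {z : V} (hzu : z ≠ u) (hzw : z ≠ w) :
    contractCol A v ℓ₁ ℓ₂ z ℓ₁ = 0 := by
  rw [contractCol_apply_self]
  by_cases hzv : z = v
  · subst hzv
    linear_combination (-A z ℓ₁) * hA.mul_self_eq_one h.apply_ne_zero₂.1
  · have h₁ : A z ℓ₁ = 0 := not_not.mp fun h' => ((h.col₁ z).mp h').elim hzv hzu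
    have h₂ : A z ℓ₂ = 0 := not_not.mp fun h' => ((h.col₂ z).mp h').elim hzv hzw
    rw [h₁, h₂, mul_zero, sub_zero]

theorem EdgesAt.contractCol_apply_ne_zero_iff (h : EdgesAt A v ℓ₁ u ℓ₂ w)
    (hA : IsSignedIncidence A) (huw : u ≠ w) (z : V) :
    contractCol A v ℓ₁ ℓ₂ z ℓ₁ ≠ 0 ↔ z = u ∨ z = w := by
  refine ⟨fun hz => by_contra fun hz' => hz ?_, ?_⟩
  · exact h.contractCol_apply_eq_zero hA (not_or.mp hz').1 (not_or.mp hz').2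
  · rintro (rfl | rfl)
    · rw [h.contractCol_apply_left huw]
      exact h.apply_ne_zero₁.2
    · rw [h.contractCol_apply_right huw, neg_ne_zero]
      exact mul_ne_zero (mul_ne_zero h.apply_ne_zero₁.1 h.apply_ne_zero₂.1) h.apply_ne_zero₂.2

theorem EdgesAt.isSignedIncidence_contractCol [DecidableEq V] (h : EdgesAt A v ℓ₁ u ℓ₂ w)
    (hA : IsSignedIncidence A) (huw : u ≠ w) : IsSignedIncidence (contractCol A v ℓ₁ ℓ₂) := by
  have hsupp := h.contractCol_apply_ne_zero_iff hA huw
  refine ⟨fun x ℓ hx => ?_, fun ℓ => ?_⟩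
  · by_cases hℓ : ℓ = ℓ₁
    · subst hℓ
      rcases (hsupp x).mp hx with rfl | rfl
      · rw [h.contractCol_apply_left huw]
        exact hA.abs_eq_one _ _ h.apply_ne_zero₁.2
      · rw [h.contractCol_apply_right huw, abs_neg, abs_mul, abs_mul,
          hA.abs_eq_one _ _ h.apply_ne_zero₁.1, hA.abs_eq_one _ _ h.apply_ne_zero₂.1,
          hA.abs_eq_one _ _ h.apply_ne_zero₂.2, one_mul, one_mul]
    · rw [contractCol_apply_of_ne hℓ] at hx ⊢
      exact hA.abs_eq_one x ℓ hx
  · by_cases hℓ : ℓ = ℓ₁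
    · subst hℓ
      rw [← card_pair huw]
      congr 1
      ext z
      simpa using hsupp z
    · simp only [contractCol_apply_of_ne hℓ]
      exact hA.card_support ℓ

theorem EdgesAt.reflTransGen_contractCol_of_detour (h : EdgesAt A v ℓ₁ u ℓ₂ w)
    (hA : IsSignedIncidence A) (huw : u ≠ w) {x : {x // x ≠ v}} {y : V} {s r t : R}
    (hxv : signedStep A (x.1, s) (v, r)) (hvy : signedStep A (v, r) (y, t)) :
    ∃ hy : y ≠ v, ReflTransGen (signedStep ((contractCol A v ℓ₁ ℓ₂).submatrix Subtype.val
      (Subtype.val : {ℓ // ℓ ≠ ℓ₂} → E))) (x, s) (⟨y, hy⟩, t) := by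
  obtain ⟨-, ℓ, hxℓ, hvℓ, hr⟩ := hxv
  obtain ⟨hvy, ℓ', hvℓ', hyℓ', ht⟩ := hvy
  dsimp only at hxℓ hvℓ hr hvy hvℓ' hyℓ' ht
  have hsupp := h.contractCol_apply_ne_zero_iff hA huw
  refine ⟨hvy.symm, ?_⟩
  -- the detour enters and leaves `v` through `ℓ₁` (from `u`) or `ℓ₂` (from `w`)
  rcases h.cases_of_ne_zero x.2 hvℓ hxℓ with ⟨hℓ, hx⟩ | ⟨hℓ, hx⟩ <;>
    rcases h.cases_of_ne_zero hvy.symm hvℓ' hyℓ' with ⟨hℓ', hy⟩ | ⟨hℓ', hy⟩ <;> subst ℓ ℓ' y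
  · have hstate : ((⟨u, hvy.symm⟩ : {x // x ≠ v}), t) = (x, s) := by
      refine Prod.ext (Subtype.ext hx.symm) ?_
      show t = s
      rw [ht, hr, hx]
      exact hA.neg_mul_neg_mul_eq hyℓ' hvℓ' s
    exact hstate ▸ .refl
  · refine .single ⟨fun he => huw (hx ▸ congrArg Subtype.val he), ⟨ℓ₁, h.edge_ne huw⟩,
      (hsupp _).mpr (.inl hx), (hsupp _).mpr (.inr rfl), ?_⟩
    simp only [submatrix_apply]
    rw [hx, h.contractCol_apply_left huw, h.contractCol_apply_right huw, ht, hr, hx]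
    ring
  · refine .single ⟨fun he => huw (hx ▸ congrArg Subtype.val he).symm, ⟨ℓ₁, h.edge_ne huw⟩,
      (hsupp _).mpr (.inr hx), (hsupp _).mpr (.inl rfl), ?_⟩
    simp only [submatrix_apply]
    rw [hx, h.contractCol_apply_left huw, h.contractCol_apply_right huw, ht, hr, hx]
    ring
  · have hstate : ((⟨w, hvy.symm⟩ : {x // x ≠ v}), t) = (x, s) := by
      refine Prod.ext (Subtype.ext hx.symm) ?_
      show t = s
      rw [ht, hr, hx]
      exact hA.neg_mul_neg_mul_eq hyℓ' hvℓ' s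
    exact hstate ▸ .refl

theorem EdgesAt.signedWalksDescend_contractCol (h : EdgesAt A v ℓ₁ u ℓ₂ w)
    (hA : IsSignedIncidence A) (huw : u ≠ w) :
    SignedWalksDescend A ((contractCol A v ℓ₁ ℓ₂).submatrix (Subtype.val : {x // x ≠ v} → V)
      (Subtype.val : {ℓ // ℓ ≠ ℓ₂} → E)) :=
  signedWalksDescend_of_detours (fun _ _ _ _ => h.signedStep_contractCol)
    fun _ _ _ _ _ _ hz hxz hzy => by
      obtain rfl := not_not.mp hz
      exact h.reflTransGen_contractCol_of_detour hA huw hxz hzy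

theorem EdgesAt.reachable_of_adj_contractCol (h : EdgesAt A v ℓ₁ u ℓ₂ w)
    (hA : IsSignedIncidence A) (huw : u ≠ w) {x y : {x // x ≠ v}}
    (hxy : (incidenceGraph ((contractCol A v ℓ₁ ℓ₂).submatrix Subtype.val
      (Subtype.val : {ℓ // ℓ ≠ ℓ₂} → E))).Adj x y) :
    (incidenceGraph A).Reachable x y := by
  obtain ⟨hne, ⟨ℓ, _⟩, hx, hy⟩ := incidenceGraph_adj.mp hxy
  by_cases hℓ : ℓ = ℓ₁
  · subst hℓ
    have hreach : ∀ z, z = u ∨ z = w → (incidenceGraph A).Reachable v z := by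
      rintro z (rfl | rfl)
      exacts [h.adj₁.reachable, h.adj₂.reachable]
    have hsupp := h.contractCol_apply_ne_zero_iff hA huw
    exact (hreach _ ((hsupp x).mp hx)).symm.trans (hreach _ ((hsupp y).mp hy))
  · simp only [submatrix_apply, contractCol_apply_of_ne hℓ] at hx hy
    exact (incidenceGraph_adj.mpr ⟨fun he => hne (Subtype.ext he), ℓ, hx, hy⟩).reachable

theorem DetFormula.of_contract [DecidableEq V] [Fintype E]
    (ih : DetFormula {x // x ≠ v} {ℓ // ℓ ≠ ℓ₂} R) (hA : IsSignedIncidence A)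
    (hneg : ∀ x, HasNegClosedWalk A x) (h : EdgesAt A v ℓ₁ u ℓ₂ w) (huw : u ≠ w) (f : V ≃ E) :
    |(A.submatrix id f).det| = 2 ^ Nat.card (incidenceGraph A).ConnectedComponent := by
  have hrow : ∀ ℓ, ℓ ≠ ℓ₂ → contractCol A v ℓ₁ ℓ₂ v ℓ = 0 := fun ℓ hℓ => by
    by_cases hℓ₁ : ℓ = ℓ₁
    · subst hℓ₁
      exact h.contractCol_apply_eq_zero hA h.ne₁.symm h.ne₂.symm
    · rw [contractCol_apply_of_ne hℓ₁]
      exact not_not.mp fun h' => ((h.row ℓ).mp h').elim hℓ₁ hℓ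
  have hA' := (h.isSignedIncidence_contractCol hA huw).submatrix_subtype
    (p := (· ≠ v)) (q := (· ≠ ℓ₂)) fun x ℓ hℓ hx hxv => hx (hxv ▸ hrow ℓ hℓ)
  have hdesc := h.signedWalksDescend_contractCol hA huw
  have hcc := SimpleGraph.card_connectedComponent_subtype_ne_eq
    (hdesc.reachable_iff fun _ _ => h.reachable_of_adj_contractCol hA huw) h.adj₁
  obtain ⟨g⟩ := nonempty_equiv_subtype_compl (p := (· = v)) (q := (· = ℓ₂)) f
    (Equiv.ofUnique _ _)
  rw [← det_contractCol_submatrix (h.edge_ne huw) f, abs_det_eq_abs_mul_of_row _ hrow f g,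
    contractCol_apply_of_ne (h.edge_ne huw).symm, hA.abs_eq_one _ _ h.apply_ne_zero₂.1, one_mul,
    ih _ hA' (hdesc.hasNegClosedWalk hneg) g, hcc]

end Contraction

section Digon

variable [Fintype V] {A : Matrix V E R} {v u : V} {ℓ₁ ℓ₂ : E}

theorem HasNegClosedWalk.mul_ne_mul_of_digon (hneg : HasNegClosedWalk A v)
    (hA : IsSignedIncidence A) (h : EdgesAt A v ℓ₁ u ℓ₂ u)
    (hu : ∀ ℓ, A u ℓ ≠ 0 ↔ ℓ = ℓ₁ ∨ ℓ = ℓ₂) :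
    A v ℓ₁ * A u ℓ₁ ≠ A v ℓ₂ * A u ℓ₂ := by
  intro hσ
  have hsign : ∀ ℓ, ℓ = ℓ₁ ∨ ℓ = ℓ₂ → A v ℓ * A u ℓ = A v ℓ₁ * A u ℓ₁ := by
    rintro ℓ (rfl | rfl)
    exacts [rfl, hσ.symm]
  have hsq : A v ℓ₁ * A u ℓ₁ * (A v ℓ₁ * A u ℓ₁) = 1 := by
    linear_combination (A u ℓ₁ * A u ℓ₁) * hA.mul_self_eq_one h.apply_ne_zero₁.1 +
      hA.mul_self_eq_one h.apply_ne_zero₁.2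
  -- if both edges of the digon had the same sign, `(v, 1)` could only reach these two states
  have hreach : ∀ p, ReflTransGen (signedStep A) (v, 1) p →
      p = (v, 1) ∨ p = (u, -(A v ℓ₁ * A u ℓ₁)) := by
    intro p hp
    induction hp with
    | refl => exact .inl rfl
    | @tail p q _ hpq ih =>
      obtain ⟨y, t⟩ := q
      obtain ⟨hne, ℓ, hx, hy, ht⟩ := hpq
      rcases ih with rfl | rfl
      · have hℓ := (h.row ℓ).mp hx
        obtain rfl : y = u := by
          rcases h.cases_of_ne_zero (Ne.symm hne) hx hy with ⟨-, hy⟩ | ⟨-, hy⟩ <;> exact hy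
        refine .inr (Prod.ext rfl ?_)
        rw [ht, hsign ℓ hℓ, mul_one]
      · have hℓ := (hu ℓ).mp hx
        obtain rfl : y = v := by
          rcases hℓ with rfl | rfl
          exacts [((h.col₁ y).mp hy).resolve_right (Ne.symm hne),
            ((h.col₂ y).mp hy).resolve_right (Ne.symm hne)]
        refine .inl (Prod.ext rfl ?_)
        dsimp only at ht ⊢
        rw [ht, mul_comm (A u ℓ), hsign ℓ hℓ]
        linear_combination hsq
  rcases hreach _ hneg with hp | hp
  · exact absurd (congrArg Prod.snd hp) (by norm_num)
  · exact h.ne₁ (congrArg Prod.fst hp).symm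

theorem DetFormula.of_digon [DecidableEq V] [Fintype E] [DecidableEq E]
    (ih : DetFormula {x // ¬(x = v ∨ x = u)} {ℓ // ¬(ℓ = ℓ₁ ∨ ℓ = ℓ₂)} R)
    (hA : IsSignedIncidence A) (hneg : ∀ x, HasNegClosedWalk A x) (h : EdgesAt A v ℓ₁ u ℓ₂ u)
    (hu : ∀ ℓ, A u ℓ ≠ 0 ↔ ℓ = ℓ₁ ∨ ℓ = ℓ₂) (h12 : ℓ₁ ≠ ℓ₂) (f : V ≃ E) :
    |(A.submatrix id f).det| = 2 ^ Nat.card (incidenceGraph A).ConnectedComponent := by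
  have hrow : ∀ x ℓ, x = v ∨ x = u → A x ℓ ≠ 0 → ℓ = ℓ₁ ∨ ℓ = ℓ₂ := by
    rintro x ℓ (rfl | rfl)
    exacts [(h.row ℓ).mp, (hu ℓ).mp]
  have hcol : ∀ x ℓ, ℓ = ℓ₁ ∨ ℓ = ℓ₂ → A x ℓ ≠ 0 → x = v ∨ x = u := by
    rintro x ℓ (rfl | rfl)
    exacts [(h.col₁ x).mp, (h.col₂ x).mp]
  have hdesc := signedWalksDescend_of_isolated hrow hcol
  have hcc := SimpleGraph.card_connectedComponent_eq_subtype_add_one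
    (hdesc.reachable_iff fun _ _ h => (incidenceGraph_submatrix_subtype_adj h).reachable)
    (v := v) fun z => by
      refine ⟨fun hz => not_not.mpr (reachable_imp_of_isolated hrow hcol hz (.inl rfl)),
        fun hz => ?_⟩
      rcases not_not.mp hz with rfl | rfl
      exacts [.refl _, h.adj₁.reachable.symm]
  set g₁ := (finTwoEquivSubtypeOr h.ne₁.symm).symm.trans (finTwoEquivSubtypeOr h12)
  obtain ⟨g₂⟩ := nonempty_equiv_subtype_compl f g₁
  have habs {x ℓ} (hx : A x ℓ ≠ 0) : |A x ℓ| = 1 := hA.abs_eq_one x ℓ hx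
  rw [abs_det_eq_mul_of_block A (fun x ℓ hx hℓ => not_not.mp fun h' => hℓ (hrow x ℓ hx h')) f
      g₁ g₂, abs_det_submatrix_finTwoEquiv,
    abs_mul_sub_mul_eq_two (habs h.apply_ne_zero₁.1) (habs h.apply_ne_zero₂.1)
      (habs h.apply_ne_zero₁.2) (habs h.apply_ne_zero₂.2) ((hneg v).mul_ne_mul_of_digon hA h hu),
    ih _ (hA.submatrix_subtype fun x ℓ hℓ hx hPx => hℓ (hrow x ℓ hPx hx))
      (hdesc.hasNegClosedWalk hneg) g₂, hcc, pow_succ, mul_comm]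

end Digon

theorem DetFormula.of_card_row_eq_two [Fintype V] [DecidableEq V] [Fintype E] [DecidableEq E]
    {A : Matrix V E R}
    (ih : ∀ (p : V → Prop) [DecidablePred p] (q : E → Prop) [DecidablePred q] (x : V), ¬p x →
      DetFormula {x // p x} {ℓ // q ℓ} R)
    (hA : IsSignedIncidence A) (hneg : ∀ x, HasNegClosedWalk A x)
    (hdeg : ∀ x, #{ℓ | A x ℓ ≠ 0} = 2) (v : V) (f : V ≃ E) :
    |(A.submatrix id f).det| = 2 ^ Nat.card (incidenceGraph A).ConnectedComponent := by
  obtain ⟨ℓ₁, ℓ₂, h12, hvℓ⟩ := card_eq_two.mp (hdeg v)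
  have hv (ℓ : E) : A v ℓ ≠ 0 ↔ ℓ = ℓ₁ ∨ ℓ = ℓ₂ := by simpa using Finset.ext_iff.mp hvℓ ℓ
  obtain ⟨u, huv, hu⟩ := hA.exists_support_eq_pair ((hv ℓ₁).mpr (.inl rfl))
  obtain ⟨w, hwv, hw⟩ := hA.exists_support_eq_pair ((hv ℓ₂).mpr (.inr rfl))
  have hedges : EdgesAt A v ℓ₁ u ℓ₂ w := ⟨hv, hu, hw, huv, hwv⟩
  rcases eq_or_ne u w with rfl | huw
  · have hsub : ({ℓ₁, ℓ₂} : Finset E) ⊆ ({ℓ | A u ℓ ≠ 0} : Finset E) := by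
      simp [insert_subset_iff, hedges.apply_ne_zero₁.2, hedges.apply_ne_zero₂.2]
    have huℓ := eq_of_subset_of_card_le hsub (by rw [hdeg u, card_pair h12])
    exact DetFormula.of_digon (ih _ _ v (by simp)) hA hneg hedges
      (fun ℓ => by simpa using (Finset.ext_iff.mp huℓ ℓ).symm) h12 f
  · exact DetFormula.of_contract (ih _ _ v (not_not.mpr rfl)) hA hneg hedges huw f

theorem detFormula (V E R : Type*) [Fintype V] [DecidableEq V] [Fintype E] [DecidableEq E]
    [CommRing R] [LinearOrder R] [IsStrictOrderedRing R] : DetFormula V E R := by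
  induction hn : Fintype.card V using Nat.strong_induction_on generalizing V E with
  | _ n ih =>
  have ih' (p : V → Prop) [DecidablePred p] (q : E → Prop) [DecidablePred q] (x : V)
      (hx : ¬p x) : DetFormula {x // p x} {ℓ // q ℓ} R :=
    ih _ (hn ▸ Fintype.card_subtype_lt hx) _ _ rfl
  intro A hA hneg f
  rcases isEmpty_or_nonempty V with hV | ⟨⟨v⟩⟩
  · simp [det_isEmpty]
  by_cases hleaf : ∃ v, #{ℓ | A v ℓ ≠ 0} = 1
  · obtain ⟨v, hv⟩ := hleaf
    obtain ⟨ℓ₀, hℓ₀⟩ := card_eq_one.mp hv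
    exact DetFormula.of_leaf (ih' _ _ v (not_not.mpr rfl)) hA hneg
      (fun ℓ => by simpa using Finset.ext_iff.mp hℓ₀ ℓ) f
  refine DetFormula.of_card_row_eq_two ih' hA hneg (hA.card_row_eq_two (Fintype.card_congr f)
    fun x => ?_) v f
  obtain ⟨ℓ, hℓ⟩ := (hneg x).exists_ne_zero
  have h1 : 0 < #{ℓ | A x ℓ ≠ 0} := card_pos.mpr ⟨ℓ, by simpa using hℓ⟩
  have h2 := not_exists.mp hleaf x
  omega

end Matrix

namespace SignedIncidence

variable {n m k : ℕ} {S : SignedIncidence n m} {N : Matrix (Fin n) (Fin m) ℝ}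

theorem IsIncidence.ne_zero_iff (hN : S.IsIncidence N) {x : Fin n} {ℓ : Fin m} :
    N x ℓ ≠ 0 ↔ x = (S.ends ℓ).1 ∨ x = (S.ends ℓ).2 := by
  obtain ⟨-, h₁, h₂, h₀⟩ := hN ℓ
  refine ⟨fun h => by_contra fun hx => h (h₀ x (not_or.mp hx).1 (not_or.mp hx).2), ?_⟩
  rintro (rfl | rfl)
  · rcases h₁ with h | h <;> rw [h] <;> norm_num
  · rcases h₂ with h | h <;> rw [h] <;> norm_num

theorem IsIncidence.sigma_eq (hN : S.IsIncidence N) {x y : Fin n} {ℓ : Fin m} (hxy : x ≠ y)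
    (hx : N x ℓ ≠ 0) (hy : N y ℓ ≠ 0) : (S.sigma x y : ℝ) = -(N x ℓ * N y ℓ) := by
  have h := (hN ℓ).1
  rcases hN.ne_zero_iff.mp hx with rfl | rfl <;> rcases hN.ne_zero_iff.mp hy with rfl | rfl
  · exact absurd rfl hxy
  · linarith
  · rw [S.sigma_symm, mul_comm]
    linarith
  · exact absurd rfl hxy

theorem IsIncidence.isSignedIncidence_submatrix (hN : S.IsIncidence N) (em : Fin k → Fin m) :
    (N.submatrix id em).IsSignedIncidence where
  abs_eq_one x ℓ h := by
    obtain ⟨-, h₁, h₂, -⟩ := hN (em ℓ)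
    change |N x (em ℓ)| = 1
    rcases hN.ne_zero_iff.mp h with rfl | rfl
    · rcases h₁ with h | h <;> rw [h] <;> norm_num
    · rcases h₂ with h | h <;> rw [h] <;> norm_num
  card_support ℓ := by
    rw [← card_pair (S.ends_adj (em ℓ)).ne]
    congr 1
    ext x
    simp [hN.ne_zero_iff]

theorem IsIncidence.incidenceGraph_submatrix (hN : S.IsIncidence N) (em : Fin k → Fin m) :
    incidenceGraph (N.submatrix id em) =
      SimpleGraph.fromEdgeSet (Set.range fun ℓ => S.edge (em ℓ)) := by
  ext x y
  simp only [incidenceGraph_adj, SimpleGraph.fromEdgeSet_adj, Set.mem_range, edge, Sym2.eq_iff,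
    submatrix_apply, id, hN.ne_zero_iff]
  constructor
  · rintro ⟨hxy, ℓ, hx, hy⟩
    refine ⟨⟨ℓ, ?_⟩, hxy⟩
    rcases hx with rfl | rfl <;> rcases hy with rfl | rfl <;> simp_all
  · rintro ⟨⟨ℓ, h | h⟩, hxy⟩
    · exact ⟨hxy, ℓ, .inl h.1.symm, .inr h.2.symm⟩
    · exact ⟨hxy, ℓ, .inr h.2.symm, .inl h.1.symm⟩

theorem IsIncidence.reflTransGen_signedStep_of_walk (hN : S.IsIncidence N) (em : Fin k → Fin m)
    {x y : Fin n} (w : (incidenceGraph (N.submatrix id em)).Walk x y) (s : ℝ) :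
    ReflTransGen (signedStep (N.submatrix id em)) (x, s) (y, (S.walkSign w : ℝ) * s) := by
  induction w generalizing s with
  | nil =>
    simp only [walkSign, SimpleGraph.Walk.darts_nil, List.map_nil, List.prod_nil, Int.cast_one,
      one_mul]
    rfl
  | @cons x y z hxy w ih =>
    obtain ⟨hne, ℓ, hx, hy⟩ := incidenceGraph_adj.mp hxy
    have hsign : S.walkSign (.cons hxy w) = S.sigma x y * S.walkSign w := by
      simp [walkSign]
    refine .head (b := (y, -(N x (em ℓ) * N y (em ℓ)) * s)) ⟨hne, ℓ, hx, hy, rfl⟩ ?_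
    convert ih _ using 2
    rw [hsign, Int.cast_mul, hN.sigma_eq hne hx hy]
    ring

end SignedIncidence

theorem TU_subgraph_incidence_det_general {n M : ℕ} (S : SignedIncidence n M)
    (N : Matrix (Fin n) (Fin M) ℝ) (hN : S.IsIncidence N)
    (em : Fin n → Fin M)
    (HG : SimpleGraph (Fin n))
    (hHG : HG = SimpleGraph.fromEdgeSet (Set.range fun ℓ => S.edge (em ℓ)))
    (hcomp : ∀ v : Fin n, ∃ (u : Fin n) (w : HG.Walk u u),
      HG.Reachable v u ∧ S.walkSign w = -1) :
    (N.submatrix id em).det = 2 ^ (Nat.card HG.ConnectedComponent) ∨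
      (N.submatrix id em).det = -(2 ^ (Nat.card HG.ConnectedComponent)) := by
  have hA := hN.isSignedIncidence_submatrix em
  obtain rfl : incidenceGraph (N.submatrix id em) = HG := hHG ▸ hN.incidenceGraph_submatrix em
  have hneg (x : Fin n) : HasNegClosedWalk (N.submatrix id em) x := by
    obtain ⟨u, w, hxu, hw⟩ := hcomp x
    refine hA.hasNegClosedWalk_of_reachable hxu ?_
    simpa [HasNegClosedWalk, hw] using hN.reflTransGen_signedStep_of_walk em w 1
  rw [← abs_eq (by positivity)]
  simpa using detFormula _ _ _ _ hA hneg (Equiv.refl _)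

theorem TU_subgraph_incidence_det {n M : ℕ} (S : SignedIncidence n M)
    (hconn : S.G.Connected) (hunb : ¬ S.Balanced)
    (N : Matrix (Fin n) (Fin M) ℝ) (hN : S.IsIncidence N)
    (em : Fin n → Fin M) (hem : Function.Injective em)
    (HG : SimpleGraph (Fin n))
    (hHG : HG = SimpleGraph.fromEdgeSet (Set.range fun ℓ => S.edge (em ℓ)))
    (hcomp : ∀ v : Fin n, ∃ (u : Fin n) (w : HG.Walk u u),
      HG.Reachable v u ∧ S.walkSign w = -1) :
    (N.submatrix id em).det = 2 ^ (Nat.card HG.ConnectedComponent) ∨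
      (N.submatrix id em).det = -(2 ^ (Nat.card HG.ConnectedComponent)) :=
  TU_subgraph_incidence_det_general S N hN em HG hHG hcomp
end

section
/- Let Γ be an unbalanced connected signed graph on n ≥ 2 vertices with incidence matrix N. Then N N† = I_n, where N† is the Moore-Penrose inverse of N. -/
open Matrix BigOperators

/-- `X` is a Moore-Penrose inverse of `A`. -/
def IsMoorePenrose {p q : ℕ} (A : Matrix (Fin p) (Fin q) ℝ) (X : Matrix (Fin q) (Fin p) ℝ) : Prop :=
  A * X * A = A ∧ X * A * X = X ∧ (A * X)ᵀ = A * X ∧ (X * A)ᵀ = X * A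

/-!
A vector `x` with `xᵀ N = 0` satisfies `x_j = σ(i,j) x_i` along every edge `{i,j}`, hence
`x_j = σ(w) x_i` along every walk `w` from `i` to `j`. A negative closed walk at `i` forces
`x_i = -x_i = 0`, and connectivity spreads this to every vertex, so `N` has trivial left kernel.
Then every row of `N N† - I` lies in that kernel, because `(N N† - I) N = N N† N - N = 0`.
-/

open SimpleGraph

theorem Matrix.mul_eq_one_of_mul_mul_eq_self {R p q : Type*} [Ring R] [Fintype p] [Fintype q]
    [DecidableEq p] {A : Matrix p q R} {X : Matrix q p R} (hAXA : A * X * A = A)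
    (hker : ∀ x : p → R, x ᵥ* A = 0 → x = 0) : A * X = 1 := by
  have hM : (A * X - 1) * A = 0 := by rw [Matrix.sub_mul, hAXA, Matrix.one_mul, sub_self]
  rw [← sub_eq_zero]
  funext r
  exact hker _ (by rw [← mul_apply_eq_vecMul, hM]; rfl)

namespace SignedIncidence

variable {n m : ℕ} (S : SignedIncidence n m)

@[simp]
theorem walkSign_nil {G' : SimpleGraph (Fin n)} (i : Fin n) :
    S.walkSign (Walk.nil : G'.Walk i i) = 1 := by
  simp [walkSign]

@[simp]
theorem walkSign_cons {G' : SimpleGraph (Fin n)} {u v w : Fin n} (h : G'.Adj u v)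
    (p : G'.Walk v w) : S.walkSign (Walk.cons h p) = S.sigma u v * S.walkSign p := by
  simp [walkSign]

theorem walkSign_eq_one_or_neg_one {i j : Fin n} (w : S.G.Walk i j) :
    S.walkSign w = 1 ∨ S.walkSign w = -1 := by
  induction w with
  | nil => simp
  | @cons u v j h p ih =>
    rcases S.sigma_sign u v h with hs | hs <;> rcases ih with hp | hp <;> simp [hs, hp]

theorem exists_walkSign_eq_neg_one_of_not_balanced (hunb : ¬ S.Balanced) :
    ∃ (i : Fin n) (w : S.G.Walk i i), S.walkSign w = -1 := by
  simp only [Balanced, not_forall] at hunb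
  obtain ⟨i, w, hw⟩ := hunb
  exact ⟨i, w, (S.walkSign_eq_one_or_neg_one w).resolve_left hw⟩

namespace IsIncidence

variable {S} {N : Matrix (Fin n) (Fin m) ℝ} (hN : S.IsIncidence N)
include hN

theorem vecMul_apply (x : Fin n → ℝ) (ℓ : Fin m) :
    (x ᵥ* N) ℓ = x (S.ends ℓ).1 * N (S.ends ℓ).1 ℓ + x (S.ends ℓ).2 * N (S.ends ℓ).2 ℓ := by
  have hne : (S.ends ℓ).1 ≠ (S.ends ℓ).2 := (S.ends_adj ℓ).ne
  refine (Finset.sum_subset (Finset.subset_univ _) fun k _ hk => ?_).symm.trans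
    (Finset.sum_pair hne)
  simp only [Finset.mem_insert, Finset.mem_singleton, not_or] at hk
  simp [(hN ℓ).2.2.2 k hk.1 hk.2]

/-- The entries at the two ends are `±1`, so multiplying the column equation by either one
isolates the other endpoint. -/
theorem eq_sigma_mul_of_vecMul_eq_zero_ends {x : Fin n → ℝ} (hx : x ᵥ* N = 0) (ℓ : Fin m) :
    x (S.ends ℓ).2 = S.sigma (S.ends ℓ).1 (S.ends ℓ).2 * x (S.ends ℓ).1 ∧
      x (S.ends ℓ).1 = S.sigma (S.ends ℓ).1 (S.ends ℓ).2 * x (S.ends ℓ).2 := by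
  obtain ⟨hprod, ha, hb, -⟩ := hN ℓ
  have hcol := hN.vecMul_apply x ℓ
  rw [hx, Pi.zero_apply] at hcol
  have ha2 : N (S.ends ℓ).1 ℓ * N (S.ends ℓ).1 ℓ = 1 := by rcases ha with h | h <;> simp [h]
  have hb2 : N (S.ends ℓ).2 ℓ * N (S.ends ℓ).2 ℓ = 1 := by rcases hb with h | h <;> simp [h]
  constructor
  · linear_combination -N (S.ends ℓ).2 ℓ * hcol - x (S.ends ℓ).1 * hprod - x (S.ends ℓ).2 * hb2
  · linear_combination -N (S.ends ℓ).1 ℓ * hcol - x (S.ends ℓ).2 * hprod - x (S.ends ℓ).1 * ha2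

theorem eq_sigma_mul_of_vecMul_eq_zero {x : Fin n → ℝ} (hx : x ᵥ* N = 0) {i j : Fin n}
    (hij : S.G.Adj i j) : x j = S.sigma i j * x i := by
  obtain ⟨ℓ, hℓ⟩ := S.ends_surj s(i, j) hij
  obtain ⟨h₂, h₁⟩ := hN.eq_sigma_mul_of_vecMul_eq_zero_ends hx ℓ
  rcases Sym2.eq_iff.mp hℓ with ⟨ha, hb⟩ | ⟨ha, hb⟩
  · rwa [ha, hb] at h₂
  · rwa [ha, hb, S.sigma_symm] at h₁

theorem eq_walkSign_mul_of_vecMul_eq_zero {x : Fin n → ℝ} (hx : x ᵥ* N = 0) {i j : Fin n}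
    (w : S.G.Walk i j) : x j = S.walkSign w * x i := by
  induction w with
  | nil => simp
  | @cons u v j h p ih =>
    rw [ih, hN.eq_sigma_mul_of_vecMul_eq_zero hx h, walkSign_cons]
    push_cast
    ring

theorem eq_zero_of_vecMul_eq_zero (hconn : S.G.Connected) (hunb : ¬ S.Balanced)
    {x : Fin n → ℝ} (hx : x ᵥ* N = 0) : x = 0 := by
  obtain ⟨i, w, hw⟩ := S.exists_walkSign_eq_neg_one_of_not_balanced hunb
  have hxi : x i = 0 := by
    have := hN.eq_walkSign_mul_of_vecMul_eq_zero hx w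
    rw [hw] at this
    push_cast at this
    linarith
  funext j
  obtain ⟨w'⟩ := hconn.preconnected i j
  rw [hN.eq_walkSign_mul_of_vecMul_eq_zero hx w', hxi, mul_zero, Pi.zero_apply]

end IsIncidence

end SignedIncidence

theorem unbalanced_NNdagger_general {n m : ℕ} (S : SignedIncidence n m)
    (hconn : S.G.Connected) (hunb : ¬ S.Balanced)
    (N : Matrix (Fin n) (Fin m) ℝ) (hN : S.IsIncidence N)
    (X : Matrix (Fin m) (Fin n) ℝ) (hX : IsMoorePenrose N X) :
    N * X = 1 :=
  mul_eq_one_of_mul_mul_eq_self hX.1 fun _ => hN.eq_zero_of_vecMul_eq_zero hconn hunb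

theorem unbalanced_NNdagger {n m : ℕ} (hn : 2 ≤ n) (S : SignedIncidence n m)
    (hconn : S.G.Connected) (hunb : ¬ S.Balanced)
    (N : Matrix (Fin n) (Fin m) ℝ) (hN : S.IsIncidence N)
    (X : Matrix (Fin m) (Fin n) ℝ) (hX : IsMoorePenrose N X) :
    N * X = 1 :=
  unbalanced_NNdagger_general S hconn hunb N hN X hX
end

section
/- Let Γ be a balanced connected signed graph on n ≥ 2 vertices with incidence matrix N. Then N N† = I_n − (1/n) S, where S is the path sign matrix of Γ defined by s_{ii} = 1 and s_{ij} = sgn(P_{i−j}), the common sign of all paths from i to j. -/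
open Matrix BigOperators

/-!
Fix a vertex `i₀` and let `s` be row `i₀` of the path sign matrix `S`. Since the sign of a walk
is multiplicative under concatenation and invariant under reversal, `S = s sᵀ` and
`σ(i,j) = s i s j` on every edge, so `s` is a switching function of the balanced graph.
Consequently `sᵀ N = 0`, and in a connected graph every `x` with `xᵀ N = 0` is a multiple of `s`.
The Moore–Penrose identities give `(I - N N†)ᵀ N = 0` and `sᵀ (I - N N†) = sᵀ`; hence each column
of `I - N N†` is a multiple of `s`, and pairing with `s` (where `sᵀ s = n`) determines it:
`I - N N† = (1/n) s sᵀ = (1/n) S`.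
-/

lemma IsMoorePenrose.transpose_one_sub_mul_mul_self {p q : ℕ} {A : Matrix (Fin p) (Fin q) ℝ}
    {X : Matrix (Fin q) (Fin p) ℝ} (h : IsMoorePenrose A X) : (1 - A * X)ᵀ * A = 0 := by
  rw [transpose_sub, transpose_one, h.2.2.1, Matrix.sub_mul, Matrix.one_mul, h.1, sub_self]

namespace SignedIncidence

variable {n m : ℕ} (S : SignedIncidence n m)

section walkSign

variable {G' : SimpleGraph (Fin n)}

lemma walkSign_append {i j k : Fin n} (p : G'.Walk i j) (q : G'.Walk j k) :
    S.walkSign (p.append q) = S.walkSign p * S.walkSign q := by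
  simp [walkSign, SimpleGraph.Walk.darts_append]

lemma walkSign_reverse {i j : Fin n} (w : G'.Walk i j) : S.walkSign w.reverse = S.walkSign w := by
  simp [walkSign, SimpleGraph.Walk.darts_reverse, List.prod_reverse, Function.comp_def,
    S.sigma_symm]

end walkSign

def IsPathSignMatrix (Smat : Matrix (Fin n) (Fin n) ℝ) : Prop :=
  ∀ (i j : Fin n) (w : S.G.Walk i j), Smat i j = (S.walkSign w : ℝ)

/-- `s` is a switching function: switching `S` by `s` makes every edge positive. -/
structure IsSwitchingFunction (s : Fin n → ℝ) : Prop where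
  mul_self : ∀ i, s i * s i = 1
  sigma_eq : ∀ i j, S.G.Adj i j → (S.sigma i j : ℝ) = s i * s j

variable {S}

section PathSignMatrix

variable {Smat : Matrix (Fin n) (Fin n) ℝ} (hS : S.IsPathSignMatrix Smat) (hconn : S.G.Connected)
include hS hconn

lemma IsPathSignMatrix.apply_eq_mul (i₀ i j : Fin n) : Smat i j = Smat i₀ i * Smat i₀ j := by
  obtain ⟨w⟩ := hconn.preconnected i₀ i
  obtain ⟨v⟩ := hconn.preconnected i₀ j
  rw [hS _ _ w, hS _ _ v, hS _ _ (w.reverse.append v), walkSign_append, walkSign_reverse]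
  push_cast
  rfl

lemma IsPathSignMatrix.eq_vecMulVec (i₀ : Fin n) : Smat = vecMulVec (Smat i₀) (Smat i₀) := by
  ext i j
  exact hS.apply_eq_mul hconn i₀ i j

lemma IsPathSignMatrix.isSwitchingFunction (i₀ : Fin n) : S.IsSwitchingFunction (Smat i₀) where
  mul_self i := by
    rw [← hS.apply_eq_mul hconn i₀ i i, hS i i .nil]
    simp [walkSign]
  sigma_eq i j h := by
    rw [← hS.apply_eq_mul hconn, hS i j (.cons h .nil)]
    simp [walkSign]

end PathSignMatrix

section Incidence

variable {N : Matrix (Fin n) (Fin m) ℝ} (hN : S.IsIncidence N)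
include hN

lemma IsIncidence.vecMul_apply_s9 (x : Fin n → ℝ) (ℓ : Fin m) :
    (x ᵥ* N) ℓ = x (S.ends ℓ).1 * N (S.ends ℓ).1 ℓ + x (S.ends ℓ).2 * N (S.ends ℓ).2 ℓ :=
  Fintype.sum_eq_add _ _ (S.ends_adj ℓ).ne fun k hk => by simp [(hN ℓ).2.2.2 k hk.1 hk.2]

lemma IsIncidence.apply_fst_mul_self (ℓ : Fin m) :
    N (S.ends ℓ).1 ℓ * N (S.ends ℓ).1 ℓ = 1 := by
  rcases (hN ℓ).2.1 with h | h <;> rw [h] <;> norm_num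

variable {s : Fin n → ℝ} (hs : S.IsSwitchingFunction s)
include hs

lemma IsSwitchingFunction.apply_snd_eq (ℓ : Fin m) :
    N (S.ends ℓ).2 ℓ = -(s (S.ends ℓ).1 * s (S.ends ℓ).2) * N (S.ends ℓ).1 ℓ := by
  have hprod := (hN ℓ).1
  rw [hs.sigma_eq _ _ (S.ends_adj ℓ)] at hprod
  linear_combination N (S.ends ℓ).1 ℓ * hprod - N (S.ends ℓ).2 ℓ * hN.apply_fst_mul_self ℓ

lemma IsSwitchingFunction.vecMul_incidence : s ᵥ* N = 0 := by
  ext ℓ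
  rw [hN.vecMul_apply_s9, hs.apply_snd_eq hN, Pi.zero_apply]
  linear_combination -s (S.ends ℓ).1 * N (S.ends ℓ).1 ℓ * hs.mul_self (S.ends ℓ).2

variable {x : Fin n → ℝ} (hx : x ᵥ* N = 0)
include hx

lemma IsSwitchingFunction.mul_fst_eq_mul_snd (ℓ : Fin m) :
    s (S.ends ℓ).1 * x (S.ends ℓ).1 = s (S.ends ℓ).2 * x (S.ends ℓ).2 := by
  have h := congrFun hx ℓ
  rw [hN.vecMul_apply_s9, hs.apply_snd_eq hN, Pi.zero_apply] at h
  have hxa : x (S.ends ℓ).1 = s (S.ends ℓ).1 * s (S.ends ℓ).2 * x (S.ends ℓ).2 := by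
    linear_combination N (S.ends ℓ).1 ℓ * h
      - (x (S.ends ℓ).1 - s (S.ends ℓ).1 * s (S.ends ℓ).2 * x (S.ends ℓ).2)
        * hN.apply_fst_mul_self ℓ
  linear_combination s (S.ends ℓ).1 * hxa + s (S.ends ℓ).2 * x (S.ends ℓ).2 * hs.mul_self _

lemma IsSwitchingFunction.mul_eq_mul_of_adj {a b : Fin n} (hab : S.G.Adj a b) :
    s a * x a = s b * x b := by
  obtain ⟨ℓ, hℓ⟩ := S.ends_surj s(a, b) (S.G.mem_edgeSet.mpr hab)
  rcases Sym2.eq_iff.mp hℓ with ⟨h₁, h₂⟩ | ⟨h₁, h₂⟩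
  · simpa [h₁, h₂] using hs.mul_fst_eq_mul_snd hN hx ℓ
  · simpa [h₁, h₂] using (hs.mul_fst_eq_mul_snd hN hx ℓ).symm

lemma IsSwitchingFunction.mul_eq_mul_of_reachable {i j : Fin n} (hij : S.G.Reachable i j) :
    s i * x i = s j * x j := by
  obtain ⟨w⟩ := hij
  induction w with
  | nil => rfl
  | cons h _ ih => exact (hs.mul_eq_mul_of_adj hN hx h).trans ih

lemma IsSwitchingFunction.eq_smul_of_vecMul_eq_zero (hconn : S.G.Connected) :
    x = ((n : ℝ)⁻¹ * (s ⬝ᵥ x)) • s := by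
  ext i
  have hn : (n : ℝ) ≠ 0 := Nat.cast_ne_zero.mpr (Fin.pos_iff_nonempty.mpr hconn.nonempty).ne'
  have hdot : s ⬝ᵥ x = n * (s i * x i) := by
    simp [dotProduct, hs.mul_eq_mul_of_reachable hN hx (hconn.preconnected _ i)]
  rw [Pi.smul_apply, smul_eq_mul, hdot, inv_mul_cancel_left₀ hn]
  linear_combination (-x i) * hs.mul_self i

end Incidence

lemma IsSwitchingFunction.eq_smul_vecMulVec_of_transpose_mul_eq_zero
    {N : Matrix (Fin n) (Fin m) ℝ} (hN : S.IsIncidence N) {s : Fin n → ℝ}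
    (hs : S.IsSwitchingFunction s) (hconn : S.G.Connected)
    {ι : Type*} [Fintype ι] {R : Matrix (Fin n) ι ℝ} (hR : Rᵀ * N = 0) :
    R = (n : ℝ)⁻¹ • vecMulVec s (s ᵥ* R) := by
  ext i j
  have hcol : Rᵀ j ᵥ* N = 0 := congrFun hR j
  have := congrFun (hs.eq_smul_of_vecMul_eq_zero hN hcol hconn) i
  have hdot : (s ᵥ* R) j = s ⬝ᵥ Rᵀ j := rfl
  rw [transpose_apply, Pi.smul_apply, smul_eq_mul] at this
  rw [this, Matrix.smul_apply, vecMulVec_apply, smul_eq_mul, hdot]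
  ring

end SignedIncidence

theorem balanced_NNdagger_general {n m : ℕ} (S : SignedIncidence n m)
    (hconn : S.G.Connected)
    (N : Matrix (Fin n) (Fin m) ℝ) (hN : S.IsIncidence N)
    (X : Matrix (Fin m) (Fin n) ℝ) (hX : IsMoorePenrose N X)
    (Smat : Matrix (Fin n) (Fin n) ℝ)
    (hSpath : ∀ (i j : Fin n) (w : S.G.Walk i j), Smat i j = (S.walkSign w : ℝ)) :
    N * X = 1 - ((n : ℝ)⁻¹) • Smat := by
  have hS : S.IsPathSignMatrix Smat := hSpath
  obtain ⟨i₀⟩ := hconn.nonempty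
  have hs := hS.isSwitchingFunction hconn i₀
  have hsR : Smat i₀ ᵥ* (1 - N * X) = Smat i₀ := by
    rw [vecMul_sub, vecMul_one, ← vecMul_vecMul, hs.vecMul_incidence hN, zero_vecMul, sub_zero]
  have hR := hs.eq_smul_vecMulVec_of_transpose_mul_eq_zero hN hconn
    hX.transpose_one_sub_mul_mul_self
  rw [hsR, ← hS.eq_vecMulVec hconn i₀] at hR
  rw [← hR, sub_sub_cancel]

theorem balanced_NNdagger {n m : ℕ} (hn : 2 ≤ n) (S : SignedIncidence n m)
    (hconn : S.G.Connected) (hbal : S.Balanced)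
    (N : Matrix (Fin n) (Fin m) ℝ) (hN : S.IsIncidence N)
    (X : Matrix (Fin m) (Fin n) ℝ) (hX : IsMoorePenrose N X)
    (Smat : Matrix (Fin n) (Fin n) ℝ)
    (hSdiag : ∀ i, Smat i i = 1)
    (hSpath : ∀ (i j : Fin n) (w : S.G.Walk i j), Smat i j = (S.walkSign w : ℝ)) :
    N * X = 1 - ((n : ℝ)⁻¹) • Smat :=
  balanced_NNdagger_general S hconn N hN X hX Smat hSpath
end
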